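/- (L+(CS))-grammars recognize all permutations of regular languages: for every regular language R over a finite alphabet Σ with ε ∉ R, there exists an (L+(CS))-grammar G such that L(G) = perm(R). -/

import Mathlib

/-- Types of the Lambek calculus `L` (and of `L+(CS)`), built from primitive
types `P` by `\` (`ldiv A B = A \ B`), `/` (`rdiv B A = B / A`) and `·`. -/
inductive Fm0 (P : Type) : Type
  | prim : P → Fm0 P
  | ldiv : Fm0 P → Fm0 P → Fm0 P
  | rdiv : Fm0 P → Fm0 P → Fm0 P
  | mul  : Fm0 P → Fm0 P → Fm0 P
deriving DecidableEq

/-- Derivability of sequents in the calculus `L+(CS)`: the Lambek calculus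
(with cut) extended with the structural rule (CS): from `Pi,Psi → A` infer
`Psi,Pi → A`. -/
inductive Dcs (P : Type) : List (Fm0 P) → Fm0 P → Prop
  | ax (A : Fm0 P) :
      Dcs P [A] A
  | ldivL (Γ Δ Pi : List (Fm0 P)) (A B C : Fm0 P) :
      Dcs P (Γ ++ B :: Δ) C → Dcs P Pi A → Pi ≠ [] →
      Dcs P (Γ ++ Pi ++ Fm0.ldiv A B :: Δ) C
  | ldivR (Pi : List (Fm0 P)) (A B : Fm0 P) :
      Dcs P (A :: Pi) B → Pi ≠ [] →
      Dcs P Pi (Fm0.ldiv A B)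
  | rdivL (Γ Δ Pi : List (Fm0 P)) (A B C : Fm0 P) :
      Dcs P (Γ ++ B :: Δ) C → Dcs P Pi A → Pi ≠ [] →
      Dcs P (Γ ++ Fm0.rdiv B A :: (Pi ++ Δ)) C
  | rdivR (Pi : List (Fm0 P)) (A B : Fm0 P) :
      Dcs P (Pi ++ [A]) B → Pi ≠ [] →
      Dcs P Pi (Fm0.rdiv B A)
  | mulL (Γ Δ : List (Fm0 P)) (A B C : Fm0 P) :
      Dcs P (Γ ++ A :: B :: Δ) C →
      Dcs P (Γ ++ Fm0.mul A B :: Δ) C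
  | mulR (Pi Psi : List (Fm0 P)) (A B : Fm0 P) :
      Dcs P Pi A → Dcs P Psi B → Pi ≠ [] → Psi ≠ [] →
      Dcs P (Pi ++ Psi) (Fm0.mul A B)
  | cs (Pi Psi : List (Fm0 P)) (A : Fm0 P) :
      Dcs P (Pi ++ Psi) A → Pi ≠ [] → Psi ≠ [] →
      Dcs P (Psi ++ Pi) A
  | cut (Γ Δ Pi : List (Fm0 P)) (A B : Fm0 P) :
      Dcs P Pi A → Dcs P (Γ ++ A :: Δ) B → Pi ≠ [] →
      Dcs P (Γ ++ Pi ++ Δ) B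

/-- The language recognized by a categorial grammar based on a calculus with
derivability relation `K`: the grammar has distinguished type `S` and finite
dictionary `R` (a list of pairs `(a, T)` meaning `a ▷ T`); a nonempty word
`a1…an` is recognized iff there are types `T1,…,Tn` with `ai ▷ Ti` and
`K ⊢ T1,…,Tn → S`. -/
def GLang {α Ty : Type} (K : List Ty → Ty → Prop) (S : Ty) (R : List (α × Ty)) :
    Set (List α) :=
  { w | w ≠ [] ∧ ∃ Ts : List Ty, List.Forall₂ (fun a T => (a, T) ∈ R) w Ts ∧ K Ts S }

/-- The permutation closure `perm(L)` of a language `L`: all words obtained by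
permuting the letters of a word of `L`. -/
def permClosure {α : Type} (L : Set (List α)) : Set (List α) :=
  { w | ∃ v ∈ L, w.Perm v }

/-! Let a DFA recognize `R`. An accepted word `a₁⋯aₙ` with run `q₀, q₁, …, qₙ` receives the types
`q₁, q₁\q₂, …, qₙ₋₁\S`, which derive `S` already in `L`; in `L+(CS)` the antecedent of a derivable
sequent may be permuted freely, so every permutation of the word is recognized as well.
Conversely, interpret types as sets of multisets of letters, `q` as the multisets of words leading
to `q` and `S` as those of accepted words. This model of commutative residuated monoids validates
(CS), every dictionary entry holds of its letter, so any recognized word has the letters of an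
accepted word. -/

open scoped Pointwise

namespace Dcs

variable {P : Type}

/-- (CS) only rotates a whole antecedent; packing the pair into a product and cutting makes it act
on an adjacent pair inside a context. -/
theorem swap {Γ Δ : List (Fm0 P)} {A B C : Fm0 P} (h : Dcs P (Γ ++ A :: B :: Δ) C) :
    Dcs P (Γ ++ B :: A :: Δ) C := by
  have hmul : Dcs P ([A] ++ [B]) (.mul A B) :=
    mulR [A] [B] A B (ax A) (ax B) (List.cons_ne_nil _ _) (List.cons_ne_nil _ _)
  have hcomm : Dcs P ([B] ++ [A]) (.mul A B) :=
    cs [A] [B] _ hmul (List.cons_ne_nil _ _) (List.cons_ne_nil _ _)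
  simpa using cut Γ Δ _ _ C hcomm (mulL Γ Δ A B C h) (by simp)

theorem perm_infix {l l' : List (Fm0 P)} (hl : l.Perm l') :
    ∀ {Γ Δ : List (Fm0 P)} {C : Fm0 P}, Dcs P (Γ ++ l ++ Δ) C → Dcs P (Γ ++ l' ++ Δ) C := by
  induction hl with
  | nil => exact id
  | cons A _ ih =>
    intro Γ Δ C h
    simpa using ih (Γ := Γ ++ [A]) (by simpa using h)
  | swap A B l => intro Γ Δ C h; simpa using swap (by simpa using h)
  | trans _ _ ih₁ ih₂ => exact ih₂ ∘ ih₁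

theorem perm {Γ Γ' : List (Fm0 P)} {C : Fm0 P} (h : Dcs P Γ C) (hΓ : Γ.Perm Γ') : Dcs P Γ' C := by
  simpa using perm_infix hΓ (Γ := []) (Δ := []) (by simpa using h)

theorem cons_ldiv {Γ : List (Fm0 P)} {A B C : Fm0 P} (h : Dcs P (B :: Γ) C) :
    Dcs P (A :: .ldiv A B :: Γ) C :=
  ldivL [] Γ [A] A B C h (ax A) (List.cons_ne_nil _ _)

end Dcs

namespace Fm0

variable {P : Type} {M : Type*} [AddCommMonoid M]

/-- Both divisions are the same residual because the monoid is commutative. -/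
def interp (v : P → Set M) : Fm0 P → Set M
  | prim p => v p
  | ldiv A B => {m | ∀ x ∈ interp v A, x + m ∈ interp v B}
  | rdiv B A => {m | ∀ x ∈ interp v A, x + m ∈ interp v B}
  | mul A B => interp v A + interp v B

variable {v : P → Set M} {A B : Fm0 P} {X : Set M}

theorem subset_interp_ldiv_iff : X ⊆ (ldiv A B).interp v ↔ A.interp v + X ⊆ B.interp v := by
  simp only [Set.add_subset_iff]
  exact forall₂_comm

theorem subset_interp_rdiv_iff : X ⊆ (rdiv B A).interp v ↔ X + A.interp v ⊆ B.interp v := by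
  rw [add_comm]
  simp only [Set.add_subset_iff]
  exact forall₂_comm

end Fm0

open Fm0 in
theorem Dcs.sum_interp_subset {P : Type} {M : Type*} [AddCommMonoid M] (v : P → Set M)
    {Γ : List (Fm0 P)} {C : Fm0 P} (h : Dcs P Γ C) : (Γ.map (interp v)).sum ⊆ C.interp v := by
  induction h with
  | ax A => simp
  | ldivL Γ Δ Pi A B C _ _ _ ih₁ ih₂ =>
    have hB : (Pi.map (interp v)).sum + (ldiv A B).interp v ⊆ B.interp v :=
      (Set.add_subset_add_right ih₂).trans (subset_interp_ldiv_iff.1 subset_rfl)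
    simp only [List.map_append, List.map_cons, List.sum_append, List.sum_cons] at ih₁ ⊢
    calc _ = (Γ.map (interp v)).sum + ((Pi.map (interp v)).sum + (ldiv A B).interp v
              + (Δ.map (interp v)).sum) := by abel
      _ ⊆ _ := Set.add_subset_add_left (Set.add_subset_add_right hB)
      _ ⊆ _ := ih₁
  | ldivR Pi A B _ _ ih =>
    exact subset_interp_ldiv_iff.2 (by simpa using ih)
  | rdivL Γ Δ Pi A B C _ _ _ ih₁ ih₂ =>
    have hB : (rdiv B A).interp v + (Pi.map (interp v)).sum ⊆ B.interp v :=
      (Set.add_subset_add_left ih₂).trans (subset_interp_rdiv_iff.1 subset_rfl)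
    simp only [List.map_append, List.map_cons, List.sum_append, List.sum_cons] at ih₁ ⊢
    calc _ = (Γ.map (interp v)).sum + ((rdiv B A).interp v + (Pi.map (interp v)).sum
              + (Δ.map (interp v)).sum) := by abel
      _ ⊆ _ := Set.add_subset_add_left (Set.add_subset_add_right hB)
      _ ⊆ _ := ih₁
  | rdivR Pi A B _ _ ih =>
    exact subset_interp_rdiv_iff.2 (by simpa using ih)
  | mulL Γ Δ A B C _ ih =>
    simpa [interp, add_assoc] using ih
  | mulR Pi Psi A B _ _ _ _ ih₁ ih₂ =>
    simpa [interp] using Set.add_subset_add ih₁ ih₂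
  | cs Pi Psi A _ _ _ ih =>
    simpa [add_comm] using ih
  | cut Γ Δ Pi A B _ _ _ ih₁ ih₂ =>
    simp only [List.map_append, List.map_cons, List.sum_append, List.sum_cons] at ih₂ ⊢
    exact (Set.add_subset_add_right (Set.add_subset_add_left ih₁)).trans
      (by simpa [add_assoc] using ih₂)

theorem Fm0.coe_mem_sum_interp {α P : Type} {v : P → Set (Multiset α)} {w : List α}
    {Γ : List (Fm0 P)} (h : List.Forall₂ (fun a A => {a} ∈ A.interp v) w Γ) :
    (w : Multiset α) ∈ (Γ.map (interp v)).sum := by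
  induction h with
  | nil => exact Set.zero_mem_zero
  | @cons a _ _ _ ha _ ih =>
    rw [List.map_cons, List.sum_cons, ← Multiset.cons_coe, ← Multiset.singleton_add]
    exact Set.add_mem_add ha ih

/-! The grammar of a DFA `M`: the primitive type `0` is the distinguished type `S`, and `f q + 1`
names the state `q` (for an injective `f`). -/

namespace PermGrammar

variable {α σ : Type} (M : DFA α σ) (f : σ → ℕ)

def goalType : Fm0 ℕ := .prim 0

def stateType (q : σ) : Fm0 ℕ := .prim (f q + 1)

inductive Entry : α → Fm0 ℕ → Prop
  | single {a : α} : M.step M.start a ∈ M.accept → Entry a goalType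
  | start (a : α) : Entry a (stateType f (M.step M.start a))
  | step (q : σ) (a : α) : Entry a (.ldiv (stateType f q) (stateType f (M.step q a)))
  | last {q : σ} {a : α} : M.step q a ∈ M.accept → Entry a (.ldiv (stateType f q) goalType)

theorem finite_entry [Finite α] [Finite σ] :
    {p : α × Fm0 ℕ | Entry M f p.1 p.2}.Finite := by
  refine (((Set.finite_range fun a : α => (a, goalType)).union
    (Set.finite_range fun a : α => (a, stateType f (M.step M.start a)))).union
    ((Set.finite_range fun x : σ × α => (x.2, .ldiv (stateType f x.1)
      (stateType f (M.step x.1 x.2)))).union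
    (Set.finite_range fun x : σ × α => (x.2, .ldiv (stateType f x.1) goalType)))).subset ?_
  rintro ⟨a, T⟩ (h : Entry M f a T)
  cases h with
  | single => exact .inl (.inl ⟨a, rfl⟩)
  | start => exact .inl (.inr ⟨a, rfl⟩)
  | step q => exact .inr (.inl ⟨(q, a), rfl⟩)
  | @last q => exact .inr (.inr ⟨(q, a), rfl⟩)

def valuation : ℕ → Set (Multiset α)
  | 0 => (↑) '' M.accepts
  | n + 1 => (↑) '' {u | f (M.eval u) = n}

variable {M f}

theorem Entry.singleton_mem_interp (hf : f.Injective) {a : α} {T : Fm0 ℕ}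
    (h : Entry M f a T) : {a} ∈ T.interp (valuation M f) := by
  cases h with
  | single hacc => exact ⟨[a], hacc, Multiset.coe_singleton a⟩
  | start a => exact ⟨[a], congrArg f (M.eval_singleton a), Multiset.coe_singleton a⟩
  | step q a =>
    rintro _ ⟨u, hu, rfl⟩
    refine ⟨u ++ [a], ?_, by rw [← Multiset.coe_singleton, Multiset.coe_add]⟩
    show f (M.eval (u ++ [a])) = _
    rw [M.eval_append_singleton, hf hu]
  | last hacc =>
    rintro _ ⟨u, hu, rfl⟩
    refine ⟨u ++ [a], ?_, by rw [← Multiset.coe_singleton, Multiset.coe_add]⟩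
    show M.eval (u ++ [a]) ∈ M.accept
    rwa [M.eval_append_singleton, hf hu]

theorem mem_permClosure_of_dcs (hf : f.Injective) {w : List α} {Ts : List (Fm0 ℕ)}
    (hw : List.Forall₂ (Entry M f) w Ts) (hd : Dcs ℕ Ts goalType) :
    w ∈ permClosure M.accepts := by
  obtain ⟨u, hu, huw⟩ := hd.sum_interp_subset (valuation M f)
    (Fm0.coe_mem_sum_interp (hw.imp fun _ _ => Entry.singleton_mem_interp hf))
  exact ⟨u, hu, (Multiset.coe_eq_coe.1 huw).symm⟩

theorem exists_typing_of_evalFrom_mem_accept (a : α) (t : List α) (q : σ)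
    (h : M.evalFrom q (a :: t) ∈ M.accept) :
    ∃ Ts, List.Forall₂ (Entry M f) (a :: t) Ts ∧ Dcs ℕ (stateType f q :: Ts) goalType := by
  induction t generalizing a q with
  | nil => exact ⟨_, .cons (.last h) .nil, (Dcs.ax _).cons_ldiv⟩
  | cons b t ih =>
    obtain ⟨Ts, hTs, hd⟩ := ih b (M.step q a) h
    exact ⟨_, .cons (.step q a) hTs, hd.cons_ldiv⟩

theorem exists_typing_of_mem_accepts {u : List α} (hu : u ∈ M.accepts) (hne : u ≠ []) :
    ∃ Ts, List.Forall₂ (Entry M f) u Ts ∧ Dcs ℕ Ts goalType := by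
  obtain ⟨a, t, rfl⟩ := List.exists_cons_of_ne_nil hne
  cases t with
  | nil => exact ⟨_, .cons (.single hu) .nil, .ax _⟩
  | cons b t =>
    obtain ⟨Ts, hTs, hd⟩ := exists_typing_of_evalFrom_mem_accept (f := f) b t (M.step M.start a) hu
    exact ⟨_, .cons (.start a) hTs, hd⟩

end PermGrammar

/-- `(L+(CS))`-grammars recognize all permutations of regular languages: for
every regular language `R` over a finite alphabet with `ε ∉ R`, some
`(L+(CS))`-grammar recognizes exactly `perm(R)`. -/
theorem LCS_grammars_recognize_perm_of_regular (α : Type) [Fintype α]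
    (R : Language α) (hreg : R.IsRegular) (hε : [] ∉ R) :
    ∃ (S : Fm0 ℕ) (rel : List (α × Fm0 ℕ)),
      GLang (Dcs ℕ) S rel = permClosure R := by
  obtain ⟨σ, _, M, rfl⟩ := hreg
  obtain ⟨f, hf⟩ := Countable.exists_injective_nat σ
  set dict := (PermGrammar.finite_entry M f).toFinset.toList
  have hdict : ∀ a T, (a, T) ∈ dict ↔ PermGrammar.Entry M f a T := by simp [dict]
  refine ⟨PermGrammar.goalType, dict, Set.ext fun w => ⟨?_, ?_⟩⟩
  · rintro ⟨-, Ts, hw, hd⟩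
    exact PermGrammar.mem_permClosure_of_dcs hf (hw.imp fun a T => (hdict a T).1) hd
  · rintro ⟨u, hu, hwu⟩
    have hne : u ≠ [] := by rintro rfl; exact hε hu
    obtain ⟨Ts, hu, hd⟩ := PermGrammar.exists_typing_of_mem_accepts (f := f) hu hne
    obtain ⟨Ts', hw, hTs⟩ := List.perm_comp_forall₂ hwu hu
    exact ⟨fun h => hne (h ▸ hwu).symm.eq_nil, Ts', hw.imp fun a T => (hdict a T).2,
      hd.perm hTs.symm⟩
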